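/- arXiv:1606.08584 — 2 statements merged into one kernel-verified Lean document; each statement's English description precedes it below -/
import Mathlib

section
/- Let G be a group of nilpotency class 2 with elements a, b and central elements c₁, c₂, and suppose the subgroup generated by [a,b], c₁, c₂ is free abelian with basis [a,b], c₁, c₂. Given an integer β and integers ε₁, ε₂, ε₃, ε₄, the product (a^{-β}c₁)^{ε₁}(b⁻¹c₂)^{ε₂}(a^{β}c₁⁻¹)^{ε₃}(b c₂⁻¹)^{ε₄} equals [a,b]^{β ε₁ ε₂} if and only if ε₁ = ε₃ and ε₂ = ε₄. -/
/-!
Put `x = a^{-β} c₁` and `y = b⁻¹ c₂`. Then `a^β c₁⁻¹ = x⁻¹`, `b c₂⁻¹ = y⁻¹` and `x y = y x [a,b]^β`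
with `[a,b]` central, so moving `x^{ε₁}` past `y^{ε₂}` produces exactly `[a,b]^{βε₁ε₂}` and the
equation becomes `x^p = y^q` with `p = ε₁ - ε₃`, `q = ε₄ - ε₂`. Then `a^{-βp} b^q` is central;
commuting it with `a` and `b` gives `[a,b]^{βp} = [a,b]^q = 1`, and the basis property forces
`q = 0` and then `c₁^p = 1`, i.e. `p = 0`.
-/

section ClassTwo

variable {G : Type*} [Group G] {x y w : G}

theorem zpow_mul_zpow_eq_of_mul_eq (hxy : x * y = y * x * w) (hwx : Commute w x)
    (hwy : Commute w y) (m n : ℤ) : x ^ m * y ^ n = y ^ n * x ^ m * w ^ (m * n) := by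
  have hyx : SemiconjBy y (x * w) x := by rw [SemiconjBy, ← mul_assoc, hxy]
  have hxm : SemiconjBy (x ^ m) y (y * w ^ m) := by
    have hyxm := hyx.zpow_right m
    rw [SemiconjBy, hwx.symm.mul_zpow m, ← mul_assoc] at hyxm
    rw [SemiconjBy, ← hyxm, mul_assoc, mul_assoc, ((hwx.zpow_left m).zpow_right m).eq]
  rw [(hxm.zpow_right n).eq, (hwy.symm.zpow_right m).mul_zpow, ← zpow_mul, mul_assoc,
    ((hwx.zpow_left (m * n)).zpow_right m).eq, ← mul_assoc]

theorem commute_zpow_zpow_iff_of_mul_eq (hxy : x * y = y * x * w) (hwx : Commute w x)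
    (hwy : Commute w y) (m n : ℤ) : Commute (x ^ m) (y ^ n) ↔ w ^ (m * n) = 1 := by
  rw [Commute, SemiconjBy, zpow_mul_zpow_eq_of_mul_eq hxy hwx hwy, mul_eq_left]

theorem mul_mul_mul_eq_of_mul_eq {c d : G} (hxy : x * y = y * x * w) (hc : ∀ g, Commute c g)
    (hd : ∀ g, Commute d g) : x * c * (y * d) = y * d * (x * c) * w := by
  rw [(hc y).mul_mul_mul_comm, hxy, mul_assoc (y * x), ← ((hc w).mul_left (hd w)).eq,
    mul_assoc y d, (hd _).eq]
  simp only [mul_assoc]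

theorem zpow_mul_zpow_mul_inv_zpow_mul_inv_zpow_eq_iff (hxy : x * y = y * x * w)
    (hwx : Commute w x) (hwy : Commute w y) (e₁ e₂ e₃ e₄ : ℤ) :
    x ^ e₁ * y ^ e₂ * x⁻¹ ^ e₃ * y⁻¹ ^ e₄ = w ^ (e₁ * e₂) ↔ x ^ (e₁ - e₃) = y ^ (e₄ - e₂) := by
  have hw : Commute (w ^ (e₁ * e₂)) (y ^ e₂ * x ^ e₁) :=
    (hwy.zpow_zpow _ _).mul_right (hwx.zpow_zpow _ _)
  have hcollect : x ^ e₁ * y ^ e₂ * x⁻¹ ^ e₃ * y⁻¹ ^ e₄ =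
      w ^ (e₁ * e₂) * (y ^ e₂ * x ^ (e₁ - e₃) * y⁻¹ ^ e₄) := by
    rw [zpow_mul_zpow_eq_of_mul_eq hxy hwx hwy, ← hw.eq, inv_zpow', sub_eq_add_neg, zpow_add]
    simp only [mul_assoc]
  rw [hcollect, mul_eq_left, inv_zpow, mul_inv_eq_one, ← eq_inv_mul_iff_mul_eq, ← zpow_neg,
    ← zpow_add, neg_add_eq_sub]

theorem eq_zero_of_commute_zpow_mul_zpow (hxy : x * y = y * x * w) (hwx : Commute w x)
    (hwy : Commute w y) (hw : Function.Injective fun k : ℤ => w ^ k) {m n : ℤ}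
    (hx : Commute (x ^ m * y ^ n) x) (hy : Commute (x ^ m * y ^ n) y) : m = 0 ∧ n = 0 := by
  have hxm : Commute (x ^ m) (y ^ (1 : ℤ)) := by
    simpa using hy.mul_left ((Commute.zpow_self y n).inv_left)
  have hyn : Commute (x ^ (1 : ℤ)) (y ^ n) := by
    simpa using ((Commute.zpow_self x m).inv_left.mul_left hx).symm
  rw [commute_zpow_zpow_iff_of_mul_eq hxy hwx hwy] at hxm hyn
  exact ⟨hw (by simpa using hxm), hw (by simpa using hyn)⟩

theorem eq_zero_of_mul_zpow_eq_mul_zpow {c d : G} (hxy : x * y = y * x * w) (hwx : Commute w x)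
    (hwy : Commute w y) (hc : ∀ g, Commute c g) (hd : ∀ g, Commute d g)
    (hbasis : Function.Injective fun p : ℤ × ℤ × ℤ => w ^ p.1 * c ^ p.2.1 * d ^ p.2.2)
    {m n p q : ℤ} (h : (x ^ m * c) ^ p = (y ^ n * d) ^ q) : p = 0 ∧ q = 0 := by
  rw [(hc _).symm.mul_zpow, (hd _).symm.mul_zpow, ← zpow_mul, ← zpow_mul] at h
  have hw : Function.Injective fun k : ℤ => w ^ k := fun k l hkl =>
    congrArg Prod.fst (@hbasis (k, 0, 0) (l, 0, 0) (by simpa using hkl))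
  have he : ∀ g, Commute (d ^ q * (c ^ p)⁻¹) g := fun g =>
    ((hd g).zpow_left q).mul_left ((hc g).zpow_left p).inv_left
  have hcentral : x ^ (m * p) * y ^ (-(n * q)) = d ^ q * (c ^ p)⁻¹ := by
    rw [eq_mul_inv_of_mul_eq h, mul_assoc (y ^ _), zpow_neg, (he _).symm.mul_inv_cancel]
  obtain ⟨hmp, hnq⟩ := eq_zero_of_commute_zpow_mul_zpow hxy hwx hwy hw
    (hcentral ▸ he x) (hcentral ▸ he y)
  rw [hmp, neg_eq_zero.mp hnq] at h
  simp only [zpow_zero, one_mul] at h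
  have hpq := @hbasis (0, p, -q) (0, 0, 0) (by simp [h])
  simp only [Prod.mk.injEq, neg_eq_zero] at hpq
  exact hpq.2

end ClassTwo

/-- In a class-2 group with `c₁, c₂` central and `[a,b], c₁, c₂` a basis of a
free abelian subgroup, the product
`(a^{-β}c₁)^{ε₁}(b⁻¹c₂)^{ε₂}(a^{β}c₁⁻¹)^{ε₃}(bc₂⁻¹)^{ε₄}` equals
`[a,b]^{βε₁ε₂}` iff `ε₁ = ε₃` and `ε₂ = ε₄`. -/
theorem knapsack_quadratic_gadget {G : Type*} [Group G]
    (hc : ∀ x y g : G, (x⁻¹ * y⁻¹ * x * y) * g = g * (x⁻¹ * y⁻¹ * x * y))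
    (a b c₁ c₂ : G)
    (hc₁z : ∀ g : G, c₁ * g = g * c₁) (hc₂z : ∀ g : G, c₂ * g = g * c₂)
    (hbasis : Function.Injective fun p : ℤ × ℤ × ℤ =>
      (a⁻¹ * b⁻¹ * a * b) ^ p.1 * c₁ ^ p.2.1 * c₂ ^ p.2.2)
    (β ε₁ ε₂ ε₃ ε₄ : ℤ) :
    (a ^ (-β) * c₁) ^ ε₁ * (b⁻¹ * c₂) ^ ε₂ * (a ^ β * c₁⁻¹) ^ ε₃ * (b * c₂⁻¹) ^ ε₄ =
      (a⁻¹ * b⁻¹ * a * b) ^ (β * ε₁ * ε₂) ↔ ε₁ = ε₃ ∧ ε₂ = ε₄ := by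
  have hab : a * b = b * a * (a⁻¹ * b⁻¹ * a * b) := by group
  set z := a⁻¹ * b⁻¹ * a * b
  have hz : ∀ g, Commute z g := hc a b
  have hc₁ : ∀ g, Commute c₁ g := hc₁z
  have hc₂ : ∀ g, Commute c₂ g := hc₂z
  have hxy : a ^ (-β) * c₁ * (b⁻¹ * c₂) = b⁻¹ * c₂ * (a ^ (-β) * c₁) * z ^ β := by
    refine mul_mul_mul_eq_of_mul_eq ?_ hc₁ hc₂
    simpa using zpow_mul_zpow_eq_of_mul_eq hab (hz a) (hz b) (-β) (-1)
  have hx_inv : a ^ β * c₁⁻¹ = (a ^ (-β) * c₁)⁻¹ := by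
    rw [mul_inv_rev, zpow_neg, inv_inv, (hc₁ _).inv_left.eq]
  have hy_inv : b * c₂⁻¹ = (b⁻¹ * c₂)⁻¹ := by
    rw [mul_inv_rev, inv_inv, (hc₂ _).inv_left.eq]
  rw [hx_inv, hy_inv, mul_assoc β, zpow_mul,
    zpow_mul_zpow_mul_inv_zpow_mul_inv_zpow_eq_iff hxy ((hz _).zpow_left β) ((hz _).zpow_left β)]
  constructor
  · intro h
    obtain ⟨h₁, h₂⟩ := eq_zero_of_mul_zpow_eq_mul_zpow (m := -β) (n := -1) hab (hz a) (hz b)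
      hc₁ hc₂ hbasis (by simpa using h)
    omega
  · rintro ⟨rfl, rfl⟩
    simp
end

section
/- The free nilpotent group of class 2 of rank n embeds into the group UT_{2n+1}(ℤ) of (2n+1)×(2n+1) upper unitriangular integer matrices. -/
/-- The free nilpotent group of class 2 of rank `n`. -/
def FreeNilpotent2 (n : ℕ) : Type :=
  FreeGroup (Fin n) ⧸ (⊤ : Subgroup (FreeGroup (Fin n))).lowerCentralSeries 2

noncomputable instance (n : ℕ) : Group (FreeNilpotent2 n) :=
  inferInstanceAs (Group (FreeGroup (Fin n) ⧸ (⊤ : Subgroup (FreeGroup (Fin n))).lowerCentralSeries 2))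

/-- A square matrix is upper unitriangular if it has `1`'s on the diagonal and
`0`'s below it. -/
def IsUnitriangular {m : ℕ} (M : Matrix (Fin m) (Fin m) ℤ) : Prop :=
  (∀ i, M i i = 1) ∧ ∀ i j, j < i → M i j = 0

/-!
Send the `k`-th generator of `F/γ₃(F)` to `(eₖ, 0)` in the group of pairs `(a, C) ∈ ℤⁿ × ℤⁿˣⁿ` with
`(a, C) (a', C') = (a + a', C + C' + a a'ᵀ)`. This group is a group of unitriangular matrices:
`(a, C)` is `1 + N` where `N` carries `a` in the middle column above the diagonal, `aᵀ` in the
middle row to the right of it and `C` in the top right `n × n` corner, and `N N'` is `a a'ᵀ`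
placed in that corner.

The map from `F/γ₃(F)` is injective. An element of its kernel maps to `0` in `ℤⁿ`, hence lies in
the commutator subgroup. Since commutators are central, the commutator is bimultiplicative, so the commutator
subgroup consists of the products `∏_{i<j} [xᵢ, xⱼ] ^ mᵢⱼ`, and such a product is sent to
`(0, M - Mᵀ)` with `M = (mᵢⱼ)` strictly upper triangular, from which the `mᵢⱼ` are read off.
-/

open Subgroup
open scoped commutatorElement

section ClassTwo

variable {G : Type*} [Group G]

theorem top_lowerCentralSeries_two_eq_bot_iff :
    (⊤ : Subgroup G).lowerCentralSeries 2 = ⊥ ↔ commutator G ≤ center G :=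
  commutator_top_right_eq_bot_iff_le_center

theorem commutator_le_center_quotient_lowerCentralSeries_two :
    commutator (G ⧸ (⊤ : Subgroup G).lowerCentralSeries 2) ≤ center _ := by
  rw [← top_lowerCentralSeries_two_eq_bot_iff,
    ← map_top_of_surjective _ (QuotientGroup.mk'_surjective _), ← map_lowerCentralSeries,
    QuotientGroup.map_mk'_self]

theorem top_lowerCentralSeries_two_le_ker {H : Type*} [Group H] (hH : commutator H ≤ center H)
    (f : G →* H) : (⊤ : Subgroup G).lowerCentralSeries 2 ≤ f.ker := by
  rw [← Subgroup.map_eq_bot_iff, ← le_bot_iff, map_lowerCentralSeries,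
    ← (top_lowerCentralSeries_two_eq_bot_iff (G := H)).2 hH]
  exact lowerCentralSeries_mono 2 le_top

variable (hG : commutator G ≤ center G)
include hG

theorem commute_commutatorElement_of_le_center (a b c : G) : Commute ⁅a, b⁆ c :=
  (mem_center_iff.1 (hG (commutator_mem_commutator (mem_top a) (mem_top b))) c).symm

theorem commutatorElement_mul_left_of_le_center (a b c : G) : ⁅a * b, c⁆ = ⁅a, c⁆ * ⁅b, c⁆ := by
  rw [commutatorElement_mul_left_eq_conj_mul,
    (commute_commutatorElement_of_le_center hG b c a).eq.symm, mul_inv_cancel_right]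
  exact (commute_commutatorElement_of_le_center hG b c _).eq

theorem commutatorElement_inv_left_of_le_center (a c : G) : ⁅a⁻¹, c⁆ = ⁅a, c⁆⁻¹ := by
  rw [commutatorElement_inv_left, ← (commute_commutatorElement_of_le_center hG c a a⁻¹).eq,
    inv_mul_cancel_right, commutatorElement_inv]

theorem commutatorElement_mem_of_forall_left_mem {S : Set G} (hS : closure S = ⊤) {K : Subgroup G}
    {h : G} (hK : ∀ s ∈ S, ⁅s, h⁆ ∈ K) (g : G) : ⁅g, h⁆ ∈ K := by
  induction (hS ▸ mem_top g : g ∈ closure S) using closure_induction with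
  | mem s hs => exact hK s hs
  | one => simp
  | mul a b _ _ ha hb => rw [commutatorElement_mul_left_of_le_center hG]; exact mul_mem ha hb
  | inv a _ ha => rw [commutatorElement_inv_left_of_le_center hG]; exact inv_mem ha

theorem commutator_le_of_commutatorElement_mem {S : Set G} (hS : closure S = ⊤) {K : Subgroup G}
    (hK : ∀ s ∈ S, ∀ t ∈ S, ⁅s, t⁆ ∈ K) : commutator G ≤ K := by
  rw [_root_.commutator_def, commutator_le]
  intro g _ h _
  refine commutatorElement_mem_of_forall_left_mem hG hS (fun s hs => ?_) g
  rw [← commutatorElement_inv]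
  exact inv_mem (commutatorElement_mem_of_forall_left_mem hG hS (fun t ht => hK t ht s hs) h)

end ClassTwo

theorem ker_le_commutator_of_map_eq_single {G ι : Type*} [Group G] [Fintype ι] [DecidableEq ι]
    {y : ι → G} (hy : closure (Set.range y) = ⊤) (f : G →* Multiplicative (ι → ℤ))
    (hf : ∀ k, f (y k) = Multiplicative.ofAdd (Pi.single k 1)) : f.ker ≤ commutator G := by
  have of_eq (g : G) : Abelianization.of g = ∏ k, Abelianization.of (y k) ^ (f g).toAdd k := by
    induction (hy ▸ mem_top g : g ∈ closure (Set.range y)) using closure_induction with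
    | mem _ hs =>
      obtain ⟨i, rfl⟩ := hs
      simp [hf, Pi.single_apply]
    | one => simp
    | mul a b _ _ ha hb => simp [ha, hb, zpow_add, Finset.prod_mul_distrib]
    | inv a _ ha => simp [ha, zpow_neg]
  intro g hg
  rw [← Abelianization.ker_of, MonoidHom.mem_ker, of_eq, MonoidHom.mem_ker.1 hg]
  simp

@[ext]
structure Heis (ι R : Type*) where
  a : ι → R
  c : Matrix ι ι R

namespace Heis

open Matrix

variable {ι R : Type*}

section Ring

variable [Ring R]

instance : Mul (Heis ι R) := ⟨fun g h => ⟨g.a + h.a, g.c + h.c + vecMulVec g.a h.a⟩⟩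
instance : One (Heis ι R) := ⟨⟨0, 0⟩⟩
instance : Inv (Heis ι R) := ⟨fun g => ⟨-g.a, -g.c + vecMulVec g.a g.a⟩⟩

@[simp] theorem mul_a (g h : Heis ι R) : (g * h).a = g.a + h.a := rfl
@[simp] theorem mul_c (g h : Heis ι R) : (g * h).c = g.c + h.c + vecMulVec g.a h.a := rfl
@[simp] theorem one_a : (1 : Heis ι R).a = 0 := rfl
@[simp] theorem one_c : (1 : Heis ι R).c = 0 := rfl
@[simp] theorem inv_a (g : Heis ι R) : g⁻¹.a = -g.a := rfl
@[simp] theorem inv_c (g : Heis ι R) : g⁻¹.c = -g.c + vecMulVec g.a g.a := rfl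

instance : Group (Heis ι R) where
  mul_assoc g h k := by
    ext <;>
      simp only [mul_a, mul_c, add_vecMulVec, vecMulVec_add, Pi.add_apply, Matrix.add_apply] <;>
      abel
  one_mul g := by ext <;> simp
  mul_one g := by ext <;> simp
  inv_mul_cancel g := by ext <;> simp [neg_vecMulVec]

theorem commute_of_a_eq_zero {z : Heis ι R} (hz : z.a = 0) (g : Heis ι R) : Commute z g := by
  ext <;> simp [hz, add_comm]

def fstHom : Heis ι R →* Multiplicative (ι → R) where
  toFun g := .ofAdd g.a
  map_one' := rfl
  map_mul' _ _ := rfl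

@[simp] theorem commutatorElement_a (g h : Heis ι R) : ⁅g, h⁆.a = 0 := by
  simp [commutatorElement_def]

theorem commutator_le_center : commutator (Heis ι R) ≤ Subgroup.center (Heis ι R) := by
  rw [_root_.commutator_def, Subgroup.commutator_le]
  exact fun g _ h _ => Subgroup.mem_center_iff.2 fun k =>
    (commute_of_a_eq_zero (commutatorElement_a g h) k).eq.symm

end Ring

variable [CommRing R]

theorem commutatorElement_c (g h : Heis ι R) :
    ⁅g, h⁆.c = vecMulVec g.a h.a - vecMulVec h.a g.a := by
  ext i j
  simp only [commutatorElement_def, mul_c, inv_c, mul_a, inv_a, vecMulVec_neg, add_neg_cancel_comm,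
    Matrix.add_apply, vecMulVec_apply, Matrix.neg_apply, Pi.add_apply, Matrix.sub_apply]
  ring

end Heis

namespace Matrix

variable {α m R : Type*} [Fintype α] [DecidableEq m]

theorem sum_single_mul_sum_single_eq_zero [Fintype m] [NonUnitalNonAssocSemiring R]
    {β : Type*} [Fintype β] {r c : α → m} {r' c' : β → m} (u : α → R) (v : β → R)
    (h : ∀ x y, c x ≠ r' y) :
    (∑ x, single (r x) (c x) (u x)) * ∑ y, single (r' y) (c' y) (v y) = 0 := by
  simp only [Finset.sum_mul, Finset.mul_sum]
  exact Finset.sum_eq_zero fun _ _ => Finset.sum_eq_zero fun _ _ =>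
    single_mul_single_of_ne _ _ _ _ (h _ _) _

theorem sum_single_apply_eq_zero_of_le [LinearOrder m] [AddCommMonoid R] {r c : α → m}
    (hrc : ∀ x, r x < c x) (u : α → R) {p q : m} (hqp : q ≤ p) :
    (∑ x, single (r x) (c x) (u x)) p q = 0 := by
  rw [sum_apply]
  refine Finset.sum_eq_zero fun x _ => single_apply_of_ne _ _ _ _ _ ?_
  rintro ⟨rfl, rfl⟩
  exact (hrc x).not_ge hqp

end Matrix

namespace Heis

open Matrix

variable {R : Type*} {n : ℕ}

def leftIdx (k : Fin n) : Fin (2 * n + 1) := ⟨k, by omega⟩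
def midIdx (n : ℕ) : Fin (2 * n + 1) := ⟨n, by omega⟩
def rightIdx (k : Fin n) : Fin (2 * n + 1) := ⟨n + 1 + k, by omega⟩

@[simp] theorem leftIdx_inj {k l : Fin n} : leftIdx k = leftIdx l ↔ k = l := by
  simp [leftIdx, Fin.ext_iff]
@[simp] theorem rightIdx_inj {k l : Fin n} : rightIdx k = rightIdx l ↔ k = l := by
  simp [rightIdx, Fin.ext_iff]
theorem leftIdx_lt_midIdx (k : Fin n) : leftIdx k < midIdx n := k.2
theorem midIdx_lt_rightIdx (k : Fin n) : midIdx n < rightIdx k :=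
  Fin.mk_lt_mk.2 (by omega)
theorem leftIdx_lt_rightIdx (k l : Fin n) : leftIdx k < rightIdx l :=
  (leftIdx_lt_midIdx k).trans (midIdx_lt_rightIdx l)
@[simp] theorem midIdx_ne_leftIdx (k : Fin n) : midIdx n ≠ leftIdx k :=
  (leftIdx_lt_midIdx k).ne'
@[simp] theorem rightIdx_ne_midIdx (k : Fin n) : rightIdx k ≠ midIdx n :=
  (midIdx_lt_rightIdx k).ne'
@[simp] theorem rightIdx_ne_leftIdx (k l : Fin n) : rightIdx k ≠ leftIdx l :=
  (leftIdx_lt_rightIdx l k).ne'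

section Ring
variable [Ring R]

def colPart (a : Fin n → R) : Matrix (Fin (2 * n + 1)) (Fin (2 * n + 1)) R :=
  ∑ k, single (leftIdx k) (midIdx n) (a k)

def rowPart (a : Fin n → R) : Matrix (Fin (2 * n + 1)) (Fin (2 * n + 1)) R :=
  ∑ k, single (midIdx n) (rightIdx k) (a k)

def cornerPart (c : Matrix (Fin n) (Fin n) R) : Matrix (Fin (2 * n + 1)) (Fin (2 * n + 1)) R :=
  ∑ p : Fin n × Fin n, single (leftIdx p.1) (rightIdx p.2) (c p.1 p.2)

def nilpotentPart (g : Heis (Fin n) R) : Matrix (Fin (2 * n + 1)) (Fin (2 * n + 1)) R :=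
  colPart g.a + rowPart g.a + cornerPart g.c

theorem nilpotentPart_mul_nilpotentPart (g h : Heis (Fin n) R) :
    nilpotentPart g * nilpotentPart h = cornerPart (vecMulVec g.a h.a) := by
  have hcr : colPart g.a * rowPart h.a = cornerPart (vecMulVec g.a h.a) := by
    simp only [colPart, rowPart, cornerPart, Finset.mul_sum, Finset.sum_mul, single_mul_single_same,
      vecMulVec_apply, Fintype.sum_prod_type]
    exact Finset.sum_comm
  simp only [nilpotentPart, add_mul, mul_add, hcr]
  simp only [colPart, rowPart, cornerPart,
    sum_single_mul_sum_single_eq_zero _ _ fun _ _ => midIdx_ne_leftIdx _,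
    sum_single_mul_sum_single_eq_zero _ _ fun _ _ => rightIdx_ne_leftIdx _ _,
    sum_single_mul_sum_single_eq_zero _ _ fun _ _ => rightIdx_ne_midIdx _, add_zero, zero_add]

theorem nilpotentPart_mul (g h : Heis (Fin n) R) :
    nilpotentPart (g * h) =
      nilpotentPart g + nilpotentPart h + nilpotentPart g * nilpotentPart h := by
  rw [nilpotentPart_mul_nilpotentPart]
  simp only [nilpotentPart, colPart, rowPart, cornerPart, mul_a, mul_c, Pi.add_apply,
    Matrix.add_apply, single_add, Finset.sum_add_distrib]
  abel

def toMatrix : Heis (Fin n) R →* Matrix (Fin (2 * n + 1)) (Fin (2 * n + 1)) R where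
  toFun g := 1 + nilpotentPart g
  map_one' := by simp [nilpotentPart, colPart, rowPart, cornerPart]
  map_mul' g h := by
    rw [nilpotentPart_mul]
    noncomm_ring

theorem nilpotentPart_apply_of_le (g : Heis (Fin n) R) {p q : Fin (2 * n + 1)} (hqp : q ≤ p) :
    nilpotentPart g p q = 0 := by
  simp only [nilpotentPart, colPart, rowPart, cornerPart, Matrix.add_apply,
    sum_single_apply_eq_zero_of_le leftIdx_lt_midIdx _ hqp,
    sum_single_apply_eq_zero_of_le midIdx_lt_rightIdx _ hqp,
    sum_single_apply_eq_zero_of_le (fun p : Fin n × Fin n => leftIdx_lt_rightIdx p.1 p.2) _ hqp,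
    add_zero]

theorem nilpotentPart_apply_leftIdx_midIdx (g : Heis (Fin n) R) (k : Fin n) :
    nilpotentPart g (leftIdx k) (midIdx n) = g.a k := by
  simp [nilpotentPart, colPart, rowPart, cornerPart, Matrix.sum_apply, single_apply]

theorem nilpotentPart_apply_leftIdx_rightIdx (g : Heis (Fin n) R) (i j : Fin n) :
    nilpotentPart g (leftIdx i) (rightIdx j) = g.c i j := by
  simp [nilpotentPart, colPart, rowPart, cornerPart, Matrix.sum_apply, single_apply,
    (rightIdx_ne_midIdx j).symm, Fintype.sum_prod_type, ite_and]

theorem toMatrix_injective : Function.Injective (toMatrix (R := R) (n := n)) := by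
  intro g h hgh
  have hN : nilpotentPart g = nilpotentPart h := add_left_cancel hgh
  ext k
  · simpa [nilpotentPart_apply_leftIdx_midIdx] using congrFun₂ hN (leftIdx k) (midIdx n)
  · simpa [nilpotentPart_apply_leftIdx_rightIdx] using congrFun₂ hN (leftIdx _) (rightIdx _)

end Ring

theorem isUnitriangular_toMatrix (g : Heis (Fin n) ℤ) : IsUnitriangular (toMatrix g) := by
  refine ⟨fun p => ?_, fun p q hqp => ?_⟩
  · simp [toMatrix, nilpotentPart_apply_of_le g le_rfl]
  · simp [toMatrix, nilpotentPart_apply_of_le g hqp.le, one_apply_ne hqp.ne']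

end Heis

namespace FreeNilpotent2

open scoped IsMulCommutative

variable {n : ℕ}

noncomputable def mk : FreeGroup (Fin n) →* FreeNilpotent2 n := QuotientGroup.mk' _

noncomputable def gen (k : Fin n) : FreeNilpotent2 n := mk (FreeGroup.of k)

theorem closure_range_gen : closure (Set.range (gen (n := n))) = ⊤ := by
  rw [show Set.range (gen (n := n)) = mk '' Set.range FreeGroup.of from Set.range_comp _ _,
    ← MonoidHom.map_closure, FreeGroup.closure_range_of,
    map_top_of_surjective mk (QuotientGroup.mk'_surjective _)]

theorem commutator_le_center : commutator (FreeNilpotent2 n) ≤ center (FreeNilpotent2 n) :=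
  commutator_le_center_quotient_lowerCentralSeries_two

noncomputable def toHeis : FreeNilpotent2 n →* Heis (Fin n) ℤ :=
  QuotientGroup.lift _ (FreeGroup.lift fun k => ⟨Pi.single k 1, 0⟩)
    (top_lowerCentralSeries_two_le_ker Heis.commutator_le_center _)

@[simp] theorem toHeis_gen (k : Fin n) : toHeis (gen k) = ⟨Pi.single k 1, 0⟩ :=
  FreeGroup.lift_apply_of

noncomputable def basicCommutator (i j : Fin n) : center (FreeNilpotent2 n) :=
  ⟨⁅gen i, gen j⁆, commutator_le_center (commutator_mem_commutator (mem_top _) (mem_top _))⟩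

noncomputable def basicCommutatorProd (M : Matrix (Fin n) (Fin n) ℤ) :
    center (FreeNilpotent2 n) :=
  ∏ p ∈ Finset.univ.filter (fun p : Fin n × Fin n => p.1 < p.2),
    basicCommutator p.1 p.2 ^ M p.1 p.2

theorem basicCommutatorProd_add (M N : Matrix (Fin n) (Fin n) ℤ) :
    basicCommutatorProd (M + N) = basicCommutatorProd M * basicCommutatorProd N := by
  simp only [basicCommutatorProd, Matrix.add_apply, zpow_add, Finset.prod_mul_distrib]

theorem basicCommutatorProd_zero : basicCommutatorProd (0 : Matrix (Fin n) (Fin n) ℤ) = 1 := by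
  simp [basicCommutatorProd]

theorem basicCommutatorProd_neg (M : Matrix (Fin n) (Fin n) ℤ) :
    basicCommutatorProd (-M) = (basicCommutatorProd M)⁻¹ := by
  rw [eq_inv_iff_mul_eq_one, ← basicCommutatorProd_add, neg_add_cancel, basicCommutatorProd_zero]

theorem basicCommutatorProd_single_sub_single {k l : Fin n} (hkl : k < l) :
    basicCommutatorProd (Matrix.single k l 1 - Matrix.single l k 1) = basicCommutator k l := by
  rw [basicCommutatorProd, Finset.prod_eq_single_of_mem (k, l) (by simpa using hkl)]
  · simp [hkl.ne']
  · rintro ⟨i, j⟩ hij hne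
    have hij : i < j := by simpa using hij
    have hkl' : ¬(k = i ∧ l = j) := fun h => hne (by rw [h.1, h.2])
    have hlk : ¬(l = i ∧ k = j) := fun h => (h.1 ▸ h.2 ▸ hij).not_gt hkl
    simp [hkl', hlk]

def normalFormSubgroup : Subgroup (FreeNilpotent2 n) where
  carrier := {g | (toHeis g).a = 0 ∧ (basicCommutatorProd (toHeis g).c : FreeNilpotent2 n) = g}
  one_mem' := by simp [basicCommutatorProd_zero]
  mul_mem' := by
    rintro g h ⟨hga, hgc⟩ ⟨hha, hhc⟩
    simp [hga, hha, basicCommutatorProd_add, hgc, hhc]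
  inv_mem' := by
    rintro g ⟨hga, hgc⟩
    simp [hga, basicCommutatorProd_neg, hgc]

theorem commutatorElement_gen_mem_normalFormSubgroup (k l : Fin n) :
    ⁅gen k, gen l⁆ ∈ normalFormSubgroup (n := n) := by
  have of_lt {k l : Fin n} (hkl : k < l) : ⁅gen k, gen l⁆ ∈ normalFormSubgroup (n := n) := by
    refine ⟨by simp, ?_⟩
    rw [map_commutatorElement, Heis.commutatorElement_c, toHeis_gen, toHeis_gen]
    simp [← Matrix.single_eq_single_vecMulVec_single, basicCommutatorProd_single_sub_single hkl,
      basicCommutator]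
  rcases lt_trichotomy k l with hkl | rfl | hlk
  · exact of_lt hkl
  · simp [one_mem]
  · rw [← commutatorElement_inv]
    exact inv_mem (of_lt hlk)

theorem commutator_le_normalFormSubgroup :
    commutator (FreeNilpotent2 n) ≤ normalFormSubgroup :=
  commutator_le_of_commutatorElement_mem commutator_le_center closure_range_gen <| by
    rintro _ ⟨k, rfl⟩ _ ⟨l, rfl⟩
    exact commutatorElement_gen_mem_normalFormSubgroup k l

theorem ker_fstHom_comp_toHeis_le_commutator :
    (Heis.fstHom.comp toHeis).ker ≤ commutator (FreeNilpotent2 n) :=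
  ker_le_commutator_of_map_eq_single closure_range_gen _ fun k => by simp [Heis.fstHom]

theorem toHeis_injective : Function.Injective (toHeis (n := n)) := by
  refine (injective_iff_map_eq_one _).2 fun g hg => ?_
  obtain ⟨-, hg'⟩ := commutator_le_normalFormSubgroup
    (ker_fstHom_comp_toHeis_le_commutator (show g ∈ _ by simp [Heis.fstHom, hg]))
  rw [← hg', hg, Heis.one_c, basicCommutatorProd_zero, OneMemClass.coe_one]

end FreeNilpotent2

/-- The free nilpotent group of class 2 of rank `n` embeds into
`UT_{2n+1}(ℤ)`. -/
theorem freeNilpotent2_embeds_in_unitriangular (n : ℕ) :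
    ∃ φ : FreeNilpotent2 n →* (Matrix (Fin (2 * n + 1)) (Fin (2 * n + 1)) ℤ)ˣ,
      Function.Injective φ ∧
      ∀ g : FreeNilpotent2 n,
        IsUnitriangular ((φ g : Matrix (Fin (2 * n + 1)) (Fin (2 * n + 1)) ℤ)) :=
  ⟨(Heis.toMatrix (R := ℤ)).toHomUnits.comp FreeNilpotent2.toHeis,
    fun _ _ h => FreeNilpotent2.toHeis_injective (Heis.toMatrix_injective (congrArg Units.val h)),
    fun _ => Heis.isUnitriangular_toMatrix _⟩
end
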